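/- Let p ∈ [1, ∞) and let Z have density f_p(x) = exp(-|x|^p/p) / (2 p^{1/p} Γ(1 + 1/p)) on ℝ. Then E[|Z|^p log |Z|] = (log p + ψ(1 + 1/p))/p = m_p + 1, where m_p = (ψ(1/p) + log p)/p. -/

import Mathlib

noncomputable def fp (p x : ℝ) : ℝ :=
  Real.exp (-|x| ^ p / p) / (2 * p ^ (1 / p) * Real.Gamma (1 + 1 / p))

/-- The digamma function `ψ = Γ'/Γ`. -/
noncomputable def digamma (x : ℝ) : ℝ := deriv Real.Gamma x / Real.Gamma x

open MeasureTheory Set Real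

lemma hasDerivAt_realGamma {s : ℝ} (hs : 0 < s) :
    HasDerivAt Real.Gamma (∫ t : ℝ in Ioi 0, t ^ (s - 1) * (Real.log t * Real.exp (-t))) s := by
  have h0 : (0 : ℝ) < (s : ℂ).re := by simpa using hs
  have h1 := Complex.hasDerivAt_GammaIntegral h0
  have h2 : Complex.Gamma =ᶠ[nhds (s : ℂ)] Complex.GammaIntegral := by
    filter_upwards [(isOpen_Ioi.preimage Complex.continuous_re).mem_nhds h0] with z hz
    exact Complex.Gamma_eq_integral hz
  have h3 := h1.congr_of_eventuallyEq h2
  have h4 := h3.real_of_complex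
  have hI : (∫ t : ℝ in Ioi 0, (t : ℂ) ^ ((s : ℂ) - 1) * (Real.log t * Real.exp (-t))) =
      ((∫ t : ℝ in Ioi 0, t ^ (s - 1) * (Real.log t * Real.exp (-t)) : ℝ) : ℂ) :=
    calc (∫ t : ℝ in Ioi 0, (t : ℂ) ^ ((s : ℂ) - 1) * (Real.log t * Real.exp (-t)))
        = ∫ t : ℝ in Ioi 0, ((t ^ (s - 1) * (Real.log t * Real.exp (-t)) : ℝ) : ℂ) := by
          apply setIntegral_congr_fun measurableSet_Ioi
          intro t ht
          simp only [Complex.ofReal_mul, Complex.ofReal_cpow (le_of_lt ht), Complex.ofReal_sub,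
            Complex.ofReal_one]
      _ = _ := integral_ofReal
  rw [hI] at h4
  have hfun : (fun x : ℝ => (Complex.Gamma (x : ℂ)).re) = Real.Gamma := by
    funext x; rw [Complex.Gamma_ofReal, Complex.ofReal_re]
  rw [hfun, Complex.ofReal_re] at h4
  exact h4

lemma integrableOn_rpow_log_exp {s : ℝ} (hs : 0 < s) :
    IntegrableOn (fun t : ℝ => t ^ (s - 1) * (Real.log t * Real.exp (-t))) (Ioi 0) := by
  have hmaj : IntegrableOn (fun t : ℝ => (2 * Real.exp 1 / s) * (Real.exp (-t) * t ^ (s / 2 - 1))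
      + Real.exp (-t) * t ^ (s + 1 - 1)) (Ioi 0) :=
    ((Real.GammaIntegral_convergent (by linarith)).const_mul _).add
      (Real.GammaIntegral_convergent (by linarith))
  have hcont : ContinuousOn (fun t : ℝ => t ^ (s - 1) * (Real.log t * Real.exp (-t))) (Ioi 0) := by
    apply ContinuousOn.mul
    · exact fun x hx => (Real.continuousAt_rpow_const x _ (Or.inl (ne_of_gt hx))).continuousWithinAt
    · exact ContinuousOn.mul (Real.continuousOn_log.mono fun x hx => ne_of_gt hx)
        (Real.continuous_exp.comp continuous_neg).continuousOn
  refine Integrable.mono hmaj (hcont.aestronglyMeasurable measurableSet_Ioi) ?_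
  filter_upwards [ae_restrict_mem measurableSet_Ioi] with t ht
  have ht0 : (0 : ℝ) < t := ht
  have hexp : (0 : ℝ) < Real.exp (-t) := Real.exp_pos _
  have h1 : (0:ℝ) ≤ t ^ (s / 2 - 1) := Real.rpow_nonneg ht0.le _
  have h2 : (0:ℝ) ≤ t ^ (s + 1 - 1) := Real.rpow_nonneg ht0.le _
  have hepos : (0:ℝ) < 2 * Real.exp 1 / s := by positivity
  rw [Real.norm_eq_abs, Real.norm_eq_abs, abs_mul, abs_mul,
    abs_of_nonneg (Real.rpow_nonneg ht0.le (s-1)), abs_of_nonneg hexp.le,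
    abs_of_nonneg (show (0:ℝ) ≤ 2 * Real.exp 1 / s * (Real.exp (-t) * t ^ (s / 2 - 1))
      + Real.exp (-t) * t ^ (s + 1 - 1) by positivity)]
  rcases le_or_gt t 1 with hle | hgt
  · -- small t : |log t| = -log t ≤ (2/s) * t ^ (-(s/2))
    have hlog : |Real.log t| = -Real.log t := abs_of_nonpos (Real.log_nonpos ht0.le hle)
    have key : -Real.log t ≤ (2 / s) * t ^ (-(s / 2)) := by
      have h3 : Real.log (t ^ (-(s/2))) ≤ t ^ (-(s/2)) - 1 :=
        Real.log_le_sub_one_of_pos (Real.rpow_pos_of_pos ht0 _)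
      rw [Real.log_rpow ht0] at h3
      have h4 : -(s/2) * Real.log t ≤ t ^ (-(s/2)) := by linarith [Real.rpow_nonneg ht0.le (-(s/2))]
      calc -Real.log t = (2/s) * (-(s/2) * Real.log t) := by field_simp
        _ ≤ (2/s) * t ^ (-(s/2)) := by
            apply mul_le_mul_of_nonneg_left h4 (by positivity)
    have hpow : t ^ (s - 1) * t ^ (-(s/2)) = t ^ (s/2 - 1) := by
      rw [← Real.rpow_add ht0]; ring_nf
    have hexple : Real.exp (-t) ≤ 1 := Real.exp_le_one_iff.mpr (by linarith)
    have hexpge : Real.exp (-1) ≤ Real.exp (-t) := Real.exp_le_exp.mpr (by linarith)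
    calc t ^ (s-1) * (|Real.log t| * Real.exp (-t))
        ≤ t ^ (s-1) * (((2/s) * t ^ (-(s/2))) * 1) := by
          rw [hlog]
          apply mul_le_mul_of_nonneg_left _ (Real.rpow_nonneg ht0.le _)
          exact mul_le_mul key hexple hexp.le (by positivity)
      _ = (2/s) * t ^ (s/2 - 1) := by rw [mul_one, ← hpow]; ring
      _ ≤ (2 * Real.exp 1 / s) * (Real.exp (-t) * t ^ (s/2 - 1)) := by
          have : (2/s) ≤ (2 * Real.exp 1 / s) * Real.exp (-t) := by
            have he : Real.exp 1 * Real.exp (-1) = 1 := by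
              rw [← Real.exp_add]; norm_num
            calc (2:ℝ)/s = (2 * Real.exp 1 / s) * Real.exp (-1) := by
                  rw [div_mul_eq_mul_div, mul_assoc, he, mul_one]
              _ ≤ (2 * Real.exp 1 / s) * Real.exp (-t) :=
                  mul_le_mul_of_nonneg_left hexpge hepos.le
          calc (2/s) * t ^ (s/2-1) ≤ ((2 * Real.exp 1 / s) * Real.exp (-t)) * t ^ (s/2-1) :=
                mul_le_mul_of_nonneg_right this h1
            _ = (2 * Real.exp 1 / s) * (Real.exp (-t) * t ^ (s/2-1)) := by ring
      _ ≤ _ := le_add_of_nonneg_right (by positivity)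
  · -- large t : |log t| = log t ≤ t
    have hlog : |Real.log t| = Real.log t := abs_of_nonneg (Real.log_nonneg hgt.le)
    have key : Real.log t ≤ t := (Real.log_le_sub_one_of_pos ht0).trans (by linarith)
    have hpow : t ^ (s - 1) * t = t ^ (s + 1 - 1) := by
      rw [show s + 1 - 1 = (s-1) + 1 by ring, Real.rpow_add_one (ne_of_gt ht0)]
    calc t ^ (s-1) * (|Real.log t| * Real.exp (-t))
        ≤ t ^ (s-1) * (t * Real.exp (-t)) := by
          rw [hlog]
          exact mul_le_mul_of_nonneg_left (mul_le_mul_of_nonneg_right key hexp.le)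
            (Real.rpow_nonneg ht0.le _)
      _ = Real.exp (-t) * t ^ (s + 1 - 1) := by rw [← hpow]; ring
      _ ≤ _ := le_add_of_nonneg_left (by positivity)

lemma my_digamma_add_one {x : ℝ} (hx : 0 < x) : digamma (x + 1) = digamma x + 1 / x := by
  have hΓx : Real.Gamma x ≠ 0 := (Real.Gamma_pos_of_pos hx).ne'
  have hdiff : ∀ y : ℝ, 0 < y → DifferentiableAt ℝ Real.Gamma y := by
    intro y hy
    refine Real.differentiableAt_Gamma fun m => ?_
    have : (0:ℝ) ≤ m := Nat.cast_nonneg m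
    intro h; rw [h] at hy; linarith
  have h1 : HasDerivAt (fun y : ℝ => Real.Gamma (y + 1)) (deriv Real.Gamma (x + 1)) x := by
    have := ((hdiff (x+1) (by linarith)).hasDerivAt).comp x
      ((hasDerivAt_id x).add_const 1)
    rw [mul_one] at this
    exact this
  have h2 : HasDerivAt (fun y : ℝ => y * Real.Gamma y)
      (1 * Real.Gamma x + x * deriv Real.Gamma x) x :=
    (hasDerivAt_id x).mul (hdiff x hx).hasDerivAt
  have heq : (fun y : ℝ => Real.Gamma (y + 1)) =ᶠ[nhds x] fun y : ℝ => y * Real.Gamma y := by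
    filter_upwards [isOpen_Ioi.mem_nhds hx] with y hy
    exact Real.Gamma_add_one (ne_of_gt hy)
  have h3 : HasDerivAt (fun y : ℝ => Real.Gamma (y + 1))
      (1 * Real.Gamma x + x * deriv Real.Gamma x) x := h2.congr_of_eventuallyEq heq
  have hder : deriv Real.Gamma (x + 1) = Real.Gamma x + x * deriv Real.Gamma x := by
    have := h1.unique h3; linarith [this]
  rw [digamma, digamma, hder, Real.Gamma_add_one (ne_of_gt hx)]
  field_simp
  ring

/-- For a p-generalized Gaussian `Z`,
`E[|Z|^p log |Z|] = (log p + ψ(1 + 1/p))/p = m_p + 1` where `m_p = (ψ(1/p) + log p)/p`. -/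
theorem p_gaussian_mixed_moment (p : ℝ) (hp : 1 ≤ p) :
    (∫ x : ℝ, |x| ^ p * Real.log |x| * fp p x) = (Real.log p + digamma (1 + 1 / p)) / p ∧
    (Real.log p + digamma (1 + 1 / p)) / p = (digamma (1 / p) + Real.log p) / p + 1 := by
  constructor
  · rw [digamma]
    have hp0 : 0 < p := lt_of_lt_of_le one_pos hp
    have hΓ : 0 < Real.Gamma (1 + 1/p) := Real.Gamma_pos_of_pos (by positivity)
    have hppow : 0 < p ^ (1/p) := Real.rpow_pos_of_pos hp0 _
    set C := 2 * p ^ (1/p) * Real.Gamma (1 + 1/p) with hC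
    have hCpos : 0 < C := by positivity
    set G := Real.Gamma (1 + 1/p) with hG
    set D := deriv Real.Gamma (1 + 1/p) with hD
    -- step 1 : reduce to Ioi 0
    have step1 : (∫ x : ℝ, |x| ^ p * Real.log |x| * fp p x)
        = 2 * ∫ x in Ioi (0:ℝ), x ^ p * Real.log x * Real.exp (-x ^ p / p) / C := by
      have he : (∫ x : ℝ, |x| ^ p * Real.log |x| * fp p x)
          = ∫ x : ℝ, (fun t : ℝ => t ^ p * Real.log t * Real.exp (-t ^ p / p) / C) |x| := by
        congr 1; funext x; simp only [fp, ← hC, ← hG]; ring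
      rw [he]
      exact integral_comp_abs (f := fun t : ℝ => t ^ p * Real.log t * Real.exp (-t ^ p / p) / C)
    -- step 2 : substitute u = x ^ p
    have step2 : (∫ x in Ioi (0:ℝ), x ^ p * Real.log x * Real.exp (-x ^ p / p) / C)
        = ∫ u in Ioi (0:ℝ), u ^ (1/p) * Real.log u * Real.exp (-u / p) / (p ^ 2 * C) := by
      rw [← integral_comp_rpow_Ioi_of_pos
        (g := fun u : ℝ => u ^ (1/p) * Real.log u * Real.exp (-u / p) / (p ^ 2 * C)) hp0]
      apply setIntegral_congr_fun measurableSet_Ioi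
      intro x hx
      have hx0 : (0:ℝ) < x := hx
      have hxp : (x ^ p) ^ (1/p) = x := by
        rw [← Real.rpow_mul hx0.le, mul_one_div_cancel hp0.ne', Real.rpow_one]
      have hxx : x ^ (p - 1) * x = x ^ p := by
        rw [← Real.rpow_add_one hx0.ne']; ring_nf
      simp only [smul_eq_mul, hxp, Real.log_rpow hx0]
      rw [← hxx]
      field_simp
    -- step 3 : substitute u = p * v
    have step3 : (∫ u in Ioi (0:ℝ), u ^ (1/p) * Real.log u * Real.exp (-u / p) / (p ^ 2 * C))
        = p * ∫ v in Ioi (0:ℝ),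
            (p * v) ^ (1/p) * Real.log (p * v) * Real.exp (-(p * v) / p) / (p ^ 2 * C) := by
      rw [integral_comp_mul_left_Ioi
        (fun u : ℝ => u ^ (1/p) * Real.log u * Real.exp (-u / p) / (p ^ 2 * C)) 0 hp0,
        mul_zero, smul_eq_mul]
      exact (mul_inv_cancel_left₀ hp0.ne' _).symm
    -- step 4 : simplify the integrand
    have step4 : (∫ v in Ioi (0:ℝ),
          (p * v) ^ (1/p) * Real.log (p * v) * Real.exp (-(p * v) / p) / (p ^ 2 * C))
        = ∫ v in Ioi (0:ℝ), (p ^ (1/p) / (p ^ 2 * C)) *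
            (Real.log p * (Real.exp (-v) * v ^ (1 + 1/p - 1))
              + v ^ (1 + 1/p - 1) * (Real.log v * Real.exp (-v))) := by
      apply setIntegral_congr_fun measurableSet_Ioi
      intro v hv
      have hv0 : (0:ℝ) < v := hv
      dsimp only
      rw [Real.mul_rpow hp0.le hv0.le, Real.log_mul hp0.ne' hv0.ne',
        show -(p * v) / p = -v from by field_simp [mul_comm],
        show (1 + 1/p - 1 : ℝ) = 1/p from by ring]
      ring
    -- step 5 : split the integral
    have hiG : IntegrableOn (fun v : ℝ => Real.exp (-v) * v ^ (1 + 1/p - 1)) (Ioi 0) :=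
      Real.GammaIntegral_convergent (by positivity)
    have hiD : IntegrableOn (fun v : ℝ => v ^ (1 + 1/p - 1) * (Real.log v * Real.exp (-v)))
        (Ioi 0) := integrableOn_rpow_log_exp (by positivity)
    have step5 : (∫ v in Ioi (0:ℝ), (p ^ (1/p) / (p ^ 2 * C)) *
          (Real.log p * (Real.exp (-v) * v ^ (1 + 1/p - 1))
            + v ^ (1 + 1/p - 1) * (Real.log v * Real.exp (-v))))
        = (p ^ (1/p) / (p ^ 2 * C)) * (Real.log p * G + D) := by
      rw [integral_const_mul, integral_add (hiG.const_mul _) hiD, integral_const_mul,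
        ← Real.Gamma_eq_integral (show (0:ℝ) < 1 + 1/p by positivity),
        ← (hasDerivAt_realGamma (show (0:ℝ) < 1 + 1/p by positivity)).deriv, ← hG, ← hD]
    rw [step1, step2, step3, step4, step5, hC]
    field_simp

  · have hp0 : 0 < p := lt_of_lt_of_le one_pos hp
    have hq : 0 < 1 / p := by positivity
    have h := my_digamma_add_one hq
    rw [add_comm (1/p) 1] at h
    rw [h]
    have h2 : (1:ℝ) / (1/p) = p := by field_simp
    rw [h2]
    field_simp
    ring
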